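/- Let A be a nonempty set, ξ : B_{ℓ∞(A)} → ℝ continuous for the weak* topology (i.e., the product topology on [−1,1]^A), and φ a continuous linear functional on ℓ∞(A) with decomposition φ = φ_0 + φ_1 where φ_0 ∈ ℓ1(A) and φ_1 vanishes on all finitely supported elements of ℓ∞(A). If ξ(x*) ≤ |φ(|x*|)| for all x* ∈ B_{ℓ∞(A)}, then ξ(x*) ≤ |φ_0(|x*|)| for all x* ∈ B_{ℓ∞(A)}. -/

import Mathlib

open scoped ENNReal

noncomputable section

/-- Positive homogeneity for functions on `ℓ∞(A)` (the dual of `ℓ1(A)`). -/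
def PosHomA {A : Type*} (f : lp (fun _ : A => ℝ) ⊤ → ℝ) : Prop :=
  ∀ (c : ℝ), 0 ≤ c → ∀ x, f (c • x) = c * f x

/-- `x_1*, …, x_n* ∈ ℓ∞(A)` with `sup_{a ∈ A} Σ |x_k*(a)| ≤ 1`. -/
def AdmissibleA {A : Type*} (l : List (lp (fun _ : A => ℝ) ⊤)) : Prop :=
  ∀ a : A, (l.map (fun x => |x a|)).sum ≤ 1

/-- The norm `‖f‖_{FBL[ℓ1(A)]}` (possibly infinite). -/
def fblNormA {A : Type*} (f : lp (fun _ : A => ℝ) ⊤ → ℝ) : ℝ≥0∞ :=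
  ⨆ l : {l : List (lp (fun _ : A => ℝ) ⊤) // AdmissibleA l},
    ENNReal.ofReal ((l.1.map (fun x => |f x|)).sum)

/-- pointwise absolute value on `ℓ∞(A)`. -/
def lpAbs {A : Type*} (x : lp (fun _ : A => ℝ) ⊤) : lp (fun _ : A => ℝ) ⊤ :=
  ⟨fun a => |x a|, by
    have h2 : Memℓp (fun a => |(x : _ → ℝ) a|) ⊤ := by
      have h := lp.memℓp x
      rw [memℓp_infty_iff] at h ⊢
      simpa [Real.norm_eq_abs, abs_abs] using h
    exact h2⟩

/-- The inclusion of the product ball `[-1,1]^A` into `ℓ∞(A)`. -/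
def ballToLp {A : Type*} (x : {x : A → ℝ // ∀ a, |x a| ≤ 1}) : lp (fun _ : A => ℝ) ⊤ :=
  ⟨x.1, by
    have h2 : Memℓp x.1 ⊤ := memℓp_infty ⟨1, by
      rintro r ⟨a, rfl⟩
      simpa [Real.norm_eq_abs] using x.2 a⟩
    exact h2⟩

/-!
Truncating `x` to a finite set `F` gives a finitely supported point `x_F` of the ball, on which
`φ₁` vanishes, so the hypothesis reads `ξ(x_F) ≤ |∑_{a ∈ F} φ₀(a) |x(a)||`. As `F` grows, `x_F → x`
in the product topology, so `ξ(x_F) → ξ(x)` by continuity, while the right-hand side converges to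
`|φ₀(|x|)|` because `φ₀ ∈ ℓ1(A)`.
-/

open Filter Set Topology

section FiniteTruncation

variable {A : Type*}

def ballTruncate (F : Finset A) (x : {x : A → ℝ // ∀ a, |x a| ≤ 1}) :
    {x : A → ℝ // ∀ a, |x a| ≤ 1} :=
  ⟨(F : Set A).indicator x.1, fun a => by
    by_cases ha : a ∈ (F : Set A)
    · simpa [indicator_of_mem ha] using x.2 a
    · simp [indicator_of_notMem ha]⟩

theorem tendsto_ballTruncate_atTop (x : {x : A → ℝ // ∀ a, |x a| ≤ 1}) :
    Tendsto (fun F => ballTruncate F x) atTop (𝓝 x) := by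
  rw [tendsto_subtype_rng, tendsto_pi_nhds]
  intro a
  refine tendsto_const_nhds.congr' ?_
  filter_upwards [eventually_ge_atTop {a}] with F hF
  exact (indicator_of_mem (Finset.singleton_subset_iff.mp hF) x.1).symm

theorem lpAbs_ballToLp_ballTruncate (F : Finset A) (x : {x : A → ℝ // ∀ a, |x a| ≤ 1}) :
    ⇑(lpAbs (ballToLp (ballTruncate F x))) = (F : Set A).indicator fun a => |x.1 a| := by
  ext a
  by_cases ha : a ∈ (F : Set A) <;> simp [ballTruncate, lpAbs, ballToLp, ha]

end FiniteTruncation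

theorem apply_eq_sum_of_support_subset {A : Type*} {φ φ₁ : lp (fun _ : A => ℝ) ⊤ → ℝ}
    {φ₀ : A → ℝ} (hdecomp : ∀ x, φ x = (∑' a, φ₀ a * x a) + φ₁ x)
    (hvanish : ∀ x : lp (fun _ : A => ℝ) ⊤, (Function.support (x : A → ℝ)).Finite → φ₁ x = 0)
    {F : Finset A} {x : lp (fun _ : A => ℝ) ⊤} (hx : Function.support (x : A → ℝ) ⊆ F) :
    φ x = ∑ a ∈ F, φ₀ a * x a := by
  rw [hdecomp, hvanish x (F.finite_toSet.subset hx), add_zero]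
  refine tsum_eq_sum fun a ha => ?_
  rw [Function.notMem_support.mp fun h => ha (hx h), mul_zero]

theorem stmt14_general {A : Type*}
    (ξ : {x : A → ℝ // ∀ a, |x a| ≤ 1} → ℝ) (hξ : Continuous ξ)
    (φ : lp (fun _ : A => ℝ) ⊤ →L[ℝ] ℝ)
    (φ₀ : A → ℝ) (hφ₀ : Summable fun a => |φ₀ a|)
    (φ₁ : lp (fun _ : A => ℝ) ⊤ →L[ℝ] ℝ)
    (hdecomp : ∀ x : lp (fun _ : A => ℝ) ⊤, φ x = (∑' a, φ₀ a * x a) + φ₁ x)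
    (hvanish : ∀ x : lp (fun _ : A => ℝ) ⊤,
      (Function.support (x : A → ℝ)).Finite → φ₁ x = 0)
    (hle : ∀ x : {x : A → ℝ // ∀ a, |x a| ≤ 1}, ξ x ≤ |φ (lpAbs (ballToLp x))|) :
    ∀ x : {x : A → ℝ // ∀ a, |x a| ≤ 1}, ξ x ≤ abs (∑' a, φ₀ a * |x.1 a|) := by
  intro x
  have hsummable : Summable fun a => φ₀ a * |x.1 a| :=
    hφ₀.of_norm_bounded fun a => by
      simpa [abs_mul] using mul_le_of_le_one_right (abs_nonneg (φ₀ a)) (x.2 a)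
  have htruncate (F : Finset A) :
      φ (lpAbs (ballToLp (ballTruncate F x))) = ∑ a ∈ F, φ₀ a * |x.1 a| := by
    rw [apply_eq_sum_of_support_subset hdecomp hvanish (F := F)
      (by rw [lpAbs_ballToLp_ballTruncate]; exact support_indicator_subset)]
    refine Finset.sum_congr rfl fun a ha => ?_
    rw [lpAbs_ballToLp_ballTruncate, indicator_of_mem (Finset.mem_coe.mpr ha)]
  refine le_of_tendsto_of_tendsto' ((hξ.tendsto x).comp (tendsto_ballTruncate_atTop x))
    ((continuous_abs.tendsto _).comp hsummable.hasSum) fun F => ?_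
  simpa only [Function.comp_apply, htruncate] using hle (ballTruncate F x)

/-- if `ξ : B_{ℓ∞(A)} → ℝ` is continuous for the product topology on `[-1,1]^A`
and `ξ(x*) ≤ |φ(|x*|)|` on the ball, where `φ = φ₀ + φ₁` with `φ₀ ∈ ℓ1(A)` and `φ₁` vanishing
on finitely supported elements, then `ξ(x*) ≤ |φ₀(|x*|)|` on the ball. -/
theorem stmt14 {A : Type*} [Nonempty A]
    (ξ : {x : A → ℝ // ∀ a, |x a| ≤ 1} → ℝ) (hξ : Continuous ξ)
    (φ : lp (fun _ : A => ℝ) ⊤ →L[ℝ] ℝ)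
    (φ₀ : A → ℝ) (hφ₀ : Summable fun a => |φ₀ a|)
    (φ₁ : lp (fun _ : A => ℝ) ⊤ →L[ℝ] ℝ)
    (hdecomp : ∀ x : lp (fun _ : A => ℝ) ⊤, φ x = (∑' a, φ₀ a * x a) + φ₁ x)
    (hvanish : ∀ x : lp (fun _ : A => ℝ) ⊤,
      (Function.support (x : A → ℝ)).Finite → φ₁ x = 0)
    (hle : ∀ x : {x : A → ℝ // ∀ a, |x a| ≤ 1}, ξ x ≤ |φ (lpAbs (ballToLp x))|) :
    ∀ x : {x : A → ℝ // ∀ a, |x a| ≤ 1}, ξ x ≤ abs (∑' a, φ₀ a * |x.1 a|) :=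
  stmt14_general ξ hξ φ φ₀ hφ₀ φ₁ hdecomp hvanish hle
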